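/- arXiv:0804.3493 — 4 statements merged into one kernel-verified Lean document; each statement's English description precedes it below -/
import Mathlib

section
/- Let R be a supercommutative superalgebra over a field of characteristic ≠ 2, and let I be a superideal of R. Then the prime radical of I (intersection of all prime ideals containing I) equals {r ∈ R : ∃ n, rⁿ ∈ I} and also equals {r ∈ R : ∃ n, r₀ⁿ ∈ I₀}, where r₀ is the even component of r. -/
/-!
In a supercommutative superalgebra with `2` invertible, even elements are central and odd ones
square to zero. Hence `r ^ (n + 1) = r₀ ^ n * (r₀ + (n + 1) • r₁)`, so some power of `r` lies in
the two-sided ideal `I` iff some power of `r₀` does. For a prime `p` of the (commutative) centre,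
`a ↦ a₀ mod p` is a ring homomorphism `A → Z(A) ⧸ p`: the cross term `a₁ b₁` of `(a b)₀` squares
to zero, so it lies in `p`. Its kernel is a prime of `A`, containing the homogeneous ideal `I`
as soon as `p` contains `I ∩ Z(A)`. So an `r` lying in every prime over `I` has `r₀` in the radical
of `I ∩ Z(A)`, which closes the cycle
`{r | ∃ n, rⁿ ∈ I} ⊆ ⋂ primes ⊇ I ⊆ {r | ∃ n, r₀ⁿ ∈ I} ⊆ {r | ∃ n, rⁿ ∈ I}`.
-/

open DirectSum

theorem Commute.add_pow_succ_of_mul_self_eq_zero {R : Type*} [Semiring R] {a b : R}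
    (h : Commute a b) (hb : b * b = 0) (n : ℕ) :
    (a + b) ^ (n + 1) = a ^ n * (a + (n + 1) • b) := by
  induction n with
  | zero => simp
  | succ n ih =>
    calc (a + b) ^ (n + 1 + 1) = a ^ n * (a * a + (a * b + (n + 1) • (a * b))) := by
          rw [pow_succ, ih, mul_assoc, add_mul, smul_mul_assoc, mul_add b, hb, add_zero, ← h.eq,
            mul_add a, add_assoc]
      _ = a ^ (n + 1) * (a + (n + 1 + 1) • b) := by
          rw [← succ_nsmul', pow_succ, mul_assoc, mul_add a, mul_smul_comm]

namespace Superalgebra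

section Graded

variable {σ A : Type*} [Ring A] [SetLike σ A] [AddSubgroupClass σ A] (𝒜 : ZMod 2 → σ)
  [GradedRing 𝒜]

theorem proj_mem (i : ZMod 2) (r : A) : GradedRing.proj 𝒜 i r ∈ 𝒜 i := by
  rw [GradedRing.proj_apply]
  exact SetLike.coe_mem _

theorem proj_zero_add_proj_one (r : A) :
    GradedRing.proj 𝒜 0 r + GradedRing.proj 𝒜 1 r = r := by
  classical
  have h := congrArg (decompose 𝒜).symm (sum_univ_of (decompose 𝒜 r))
  rw [decompose_symm_sum, Equiv.symm_apply_apply,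
    show (Finset.univ : Finset (ZMod 2)) = {0, 1} from rfl, Finset.sum_pair zero_ne_one] at h
  simpa only [decompose_symm_of, GradedRing.proj_apply] using h

theorem proj_zero_add_of_mem_one {e o : A} (he : e ∈ 𝒜 0) (ho : o ∈ 𝒜 1) :
    GradedRing.proj 𝒜 0 (e + o) = e := by
  rw [map_add, GradedRing.proj_apply, GradedRing.proj_apply, decompose_of_mem_same 𝒜 he,
    decompose_of_mem_ne 𝒜 ho one_ne_zero, add_zero]

theorem proj_zero_one : GradedRing.proj 𝒜 0 (1 : A) = 1 := by
  rw [GradedRing.proj_apply, decompose_of_mem_same 𝒜 SetLike.GradedOne.one_mem]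

theorem mul_mem_zero_of_mem_one {u v : A} (hu : u ∈ 𝒜 1) (hv : v ∈ 𝒜 1) : u * v ∈ 𝒜 0 :=
  SetLike.mul_mem_graded (i := 1) (j := 1) hu hv

theorem proj_zero_mul (a b : A) :
    GradedRing.proj 𝒜 0 (a * b) =
      GradedRing.proj 𝒜 0 a * GradedRing.proj 𝒜 0 b +
        GradedRing.proj 𝒜 1 a * GradedRing.proj 𝒜 1 b := by
  have ha₀ := proj_mem 𝒜 0 a
  have ha₁ := proj_mem 𝒜 1 a
  have hb₀ := proj_mem 𝒜 0 b
  have hb₁ := proj_mem 𝒜 1 b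
  set a₀ := GradedRing.proj 𝒜 0 a
  set a₁ := GradedRing.proj 𝒜 1 a
  set b₀ := GradedRing.proj 𝒜 0 b
  set b₁ := GradedRing.proj 𝒜 1 b
  have hab : a * b = (a₀ * b₀ + a₁ * b₁) + (a₀ * b₁ + a₁ * b₀) := by
    rw [← proj_zero_add_proj_one 𝒜 a, ← proj_zero_add_proj_one 𝒜 b]
    noncomm_ring
  rw [hab, proj_zero_add_of_mem_one 𝒜]
  · exact add_mem (SetLike.mul_mem_graded (i := (0 : ZMod 2)) (j := 0) ha₀ hb₀)
      (mul_mem_zero_of_mem_one 𝒜 ha₁ hb₁)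
  · exact add_mem (SetLike.mul_mem_graded (i := (0 : ZMod 2)) (j := 1) ha₀ hb₁)
      (SetLike.mul_mem_graded (i := (1 : ZMod 2)) (j := 0) ha₁ hb₀)

end Graded

section Supercommutative

variable {K A : Type*} [CommRing K] [Ring A] [Algebra K A]

def IsSupercommutative (𝒜 : ZMod 2 → Submodule K A) : Prop :=
  ∀ (i j : ZMod 2) (a b : A), a ∈ 𝒜 i → b ∈ 𝒜 j → a * b = ((-1 : K) ^ (i.val * j.val)) • (b * a)

variable {𝒜 : ZMod 2 → Submodule K A}

theorem IsSupercommutative.mul_self_eq_zero_of_mem_one (h𝒜 : IsSupercommutative 𝒜)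
    (h2 : IsUnit (2 : K)) {u : A} (hu : u ∈ 𝒜 1) : u * u = 0 := by
  have h : u * u = -(u * u) := by simpa [ZMod.val_one] using h𝒜 1 1 u u hu hu
  rw [← h2.smul_eq_zero, two_smul, ← eq_neg_iff_add_eq_zero]
  exact h

variable [GradedAlgebra 𝒜]

theorem IsSupercommutative.mem_center_of_mem_zero (h𝒜 : IsSupercommutative 𝒜) {a : A}
    (ha : a ∈ 𝒜 0) : a ∈ Subring.center A := by
  have hcomm (i : ZMod 2) (b : A) (hb : b ∈ 𝒜 i) : b * a = a * b := by
    simpa using (h𝒜 0 i a b ha hb).symm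
  refine Subring.mem_center_iff.2 fun b => ?_
  rw [← proj_zero_add_proj_one 𝒜 b, add_mul, mul_add, hcomm 0 _ (proj_mem 𝒜 0 b),
    hcomm 1 _ (proj_mem 𝒜 1 b)]

end Supercommutative

section EvenCentral

variable {σ A : Type*} [Ring A] [SetLike σ A] [AddSubgroupClass σ A] {𝒜 : ZMod 2 → σ}
  [GradedRing 𝒜]

theorem pow_succ_eq_proj_zero_pow_mul (hcentral : ∀ a ∈ 𝒜 0, a ∈ Subring.center A)
    (hsq : ∀ u ∈ 𝒜 1, u * u = 0) (r : A) (n : ℕ) :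
    r ^ (n + 1) =
      GradedRing.proj 𝒜 0 r ^ n * (GradedRing.proj 𝒜 0 r + (n + 1) • GradedRing.proj 𝒜 1 r) := by
  have hcomm : Commute (GradedRing.proj 𝒜 0 r) (GradedRing.proj 𝒜 1 r) :=
    (Subring.mem_center_iff.1 (hcentral _ (proj_mem 𝒜 0 r)) _).symm
  conv_lhs => rw [← proj_zero_add_proj_one 𝒜 r]
  exact hcomm.add_pow_succ_of_mul_self_eq_zero (hsq _ (proj_mem 𝒜 1 r)) n

theorem mul_mul_self_eq_zero_of_mem_one (hcentral : ∀ a ∈ 𝒜 0, a ∈ Subring.center A)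
    (hsq : ∀ u ∈ 𝒜 1, u * u = 0) {u v : A} (hu : u ∈ 𝒜 1) (hv : v ∈ 𝒜 1) :
    u * v * (u * v) = 0 := by
  have huv : u * (u * v) = u * v * u :=
    Subring.mem_center_iff.1 (hcentral _ (mul_mem_zero_of_mem_one 𝒜 hu hv)) u
  calc u * v * (u * v) = u * (u * v) * v := by rw [huv, mul_assoc (u * v)]
    _ = 0 := by rw [← mul_assoc, hsq u hu, zero_mul, zero_mul]

def projZeroQuotient (hcentral : ∀ a ∈ 𝒜 0, a ∈ Subring.center A)
    (hsq : ∀ u ∈ 𝒜 1, u * u = 0) (p : Ideal (Subring.center A)) [p.IsPrime] :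
    A →+* Subring.center A ⧸ p where
  toFun a := Ideal.Quotient.mk p ⟨GradedRing.proj 𝒜 0 a, hcentral _ (proj_mem 𝒜 0 a)⟩
  map_one' := (congrArg (Ideal.Quotient.mk p) (Subtype.ext (proj_zero_one 𝒜))).trans (map_one _)
  map_mul' a b := by
    let odd : Subring.center A :=
      ⟨_, hcentral _ (mul_mem_zero_of_mem_one 𝒜 (proj_mem 𝒜 1 a) (proj_mem 𝒜 1 b))⟩
    have hodd : odd ∈ p := (‹p.IsPrime›.mem_or_mem_of_mul_eq_zero (Subtype.ext
      (mul_mul_self_eq_zero_of_mem_one hcentral hsq (proj_mem 𝒜 1 a) (proj_mem 𝒜 1 b)))).elim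
        id id
    have hsplit : (⟨GradedRing.proj 𝒜 0 (a * b), hcentral _ (proj_mem 𝒜 0 (a * b))⟩ :
        Subring.center A) =
          ⟨_, hcentral _ (proj_mem 𝒜 0 a)⟩ * ⟨_, hcentral _ (proj_mem 𝒜 0 b)⟩ + odd :=
      Subtype.ext (proj_zero_mul 𝒜 a b)
    simp only [hsplit, map_add, map_mul, Ideal.Quotient.eq_zero_iff_mem.2 hodd, add_zero]
  map_zero' := (congrArg (Ideal.Quotient.mk p) (Subtype.ext (map_zero _))).trans (map_zero _)
  map_add' a b :=
    (congrArg (Ideal.Quotient.mk p) (Subtype.ext (map_add _ a b))).trans (map_add _ _ _)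

theorem projZeroQuotient_eq_zero_iff (hcentral : ∀ a ∈ 𝒜 0, a ∈ Subring.center A)
    (hsq : ∀ u ∈ 𝒜 1, u * u = 0) (p : Ideal (Subring.center A)) [p.IsPrime] (a : A) :
    projZeroQuotient hcentral hsq p a = 0 ↔
      (⟨GradedRing.proj 𝒜 0 a, hcentral _ (proj_mem 𝒜 0 a)⟩ : Subring.center A) ∈ p :=
  Ideal.Quotient.eq_zero_iff_mem

theorem exists_proj_zero_pow_mem_of_mem_sInf (hcentral : ∀ a ∈ 𝒜 0, a ∈ Subring.center A)
    (hsq : ∀ u ∈ 𝒜 1, u * u = 0) {I : Ideal A} (hI : I.IsHomogeneous 𝒜) {r : A}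
    (hr : r ∈ sInf {P : Ideal A | I ≤ P ∧ P.IsPrime}) :
    ∃ n, GradedRing.proj 𝒜 0 r ^ n ∈ I := by
  let r₀ : Subring.center A := ⟨GradedRing.proj 𝒜 0 r, hcentral _ (proj_mem 𝒜 0 r)⟩
  suffices r₀ ∈ (I.comap (Subring.center A).subtype).radical by
    obtain ⟨n, hn⟩ := this
    exact ⟨n, by simpa [r₀] using hn⟩
  rw [Ideal.radical_eq_sInf, Submodule.mem_sInf]
  rintro p ⟨hIp, hp⟩
  have hIker : I ≤ RingHom.ker (projZeroQuotient hcentral hsq p) := fun x hx =>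
    (projZeroQuotient_eq_zero_iff hcentral hsq p x).2 (hIp (hI 0 hx))
  exact (projZeroQuotient_eq_zero_iff hcentral hsq p r).1
    (Submodule.mem_sInf.1 hr _ ⟨hIker, RingHom.ker_isPrime _⟩)

end EvenCentral

end Superalgebra

open Superalgebra

/-- for a superideal I of a supercommutative superalgebra (char ≠ 2), the
prime radical of I equals {r | ∃ n > 0, rⁿ ∈ I} and equals {r | ∃ n > 0, r₀ⁿ ∈ I} where
r₀ is the even component of r. -/
theorem prime_radical_of_superideal {K A : Type} [Field K] (hK : (2 : K) ≠ 0)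
    [Ring A] [Algebra K A] (𝒜 : ZMod 2 → Submodule K A) [GradedAlgebra 𝒜]
    (hcomm : ∀ (i j : ZMod 2) (a b : A), a ∈ 𝒜 i → b ∈ 𝒜 j →
      a * b = ((-1 : K) ^ (i.val * j.val)) • (b * a))
    (I : Ideal A)
    (hIsuper : I = Ideal.span {x : A | x ∈ I ∧ SetLike.IsHomogeneousElem 𝒜 x})
    (hItwosided : ∀ x ∈ I, ∀ r : A, x * r ∈ I) :
    ((sInf {P : Ideal A | I ≤ P ∧ P.IsPrime} : Ideal A) : Set A)
        = {r : A | ∃ n : ℕ, 0 < n ∧ r ^ n ∈ I} ∧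
    {r : A | ∃ n : ℕ, 0 < n ∧ r ^ n ∈ I}
        = {r : A | ∃ n : ℕ, 0 < n ∧ (GradedAlgebra.proj 𝒜 0 r) ^ n ∈ I} := by
  have hcentral (a : A) (ha : a ∈ 𝒜 0) : a ∈ Subring.center A :=
    IsSupercommutative.mem_center_of_mem_zero hcomm ha
  have hsq (u : A) (hu : u ∈ 𝒜 1) : u * u = 0 :=
    IsSupercommutative.mul_self_eq_zero_of_mem_one hcomm hK.isUnit hu
  have hI : I.IsHomogeneous 𝒜 := by
    rw [hIsuper]
    exact Ideal.homogeneous_span 𝒜 _ fun x hx => hx.2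
  have hproj (r : A) : GradedAlgebra.proj 𝒜 0 r = GradedRing.proj 𝒜 0 r := rfl
  simp only [hproj]
  have pow_mem_sub_sInf : {r : A | ∃ n : ℕ, 0 < n ∧ r ^ n ∈ I} ⊆
      (sInf {P : Ideal A | I ≤ P ∧ P.IsPrime} : Ideal A) := fun r ⟨n, _, hn⟩ =>
    Submodule.mem_sInf.2 fun P ⟨hIP, hP⟩ => hP.mem_of_pow_mem n (hIP hn)
  have sInf_sub_even_pow_mem : ((sInf {P : Ideal A | I ≤ P ∧ P.IsPrime} : Ideal A) : Set A) ⊆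
      {r : A | ∃ n : ℕ, 0 < n ∧ GradedRing.proj 𝒜 0 r ^ n ∈ I} := fun r hr => by
    obtain ⟨n, hn⟩ := exists_proj_zero_pow_mem_of_mem_sInf hcentral hsq hI hr
    exact ⟨n + 1, n.succ_pos, pow_succ' (GradedRing.proj 𝒜 0 r) n ▸ I.mul_mem_left _ hn⟩
  have even_pow_mem_sub_pow_mem : {r : A | ∃ n : ℕ, 0 < n ∧ GradedRing.proj 𝒜 0 r ^ n ∈ I} ⊆
      {r : A | ∃ n : ℕ, 0 < n ∧ r ^ n ∈ I} := fun r ⟨n, _, hn⟩ =>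
    ⟨n + 1, n.succ_pos, pow_succ_eq_proj_zero_pow_mul hcentral hsq r n ▸ hItwosided _ hn _⟩
  exact ⟨(sInf_sub_even_pow_mem.trans even_pow_mem_sub_pow_mem).antisymm pow_mem_sub_sInf,
    (pow_mem_sub_sInf.trans sInf_sub_even_pow_mem).antisymm even_pow_mem_sub_pow_mem⟩
end

section
/- Let A be a supercommutative superalgebra over a field of characteristic ≠ 2, and suppose elements a₁, …, aₙ ∈ A generate A as a left ideal. Then the even components a₁,₀, …, aₙ,₀ of these elements also generate A as an ideal. -/
/-!
Write `1 = ∑ rᵢ aᵢ = y + x` with `y = ∑ rᵢ aᵢ,₀` and `x = ∑ rᵢ aᵢ,₁`. An odd `b` squares to zero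
(char ≠ 2) and satisfies `b c = σ(c) b` for the parity automorphism `σ`, so `(c b)² = c σ(c) b b = 0`
and every `1 + c b` is invertible: odd elements lie in the Jacobson radical, hence so does `x`.
Then `y = 1 - x` has a left inverse, so `1` lies in the left ideal spanned by the even components.
-/

namespace GradedAlgebra

variable {K A : Type*} [CommRing K] [Ring A] [Algebra K A] (𝒜 : ZMod 2 → Submodule K A)
  [GradedAlgebra 𝒜]

theorem proj_zero_add_proj_one (x : A) : proj 𝒜 0 x + proj 𝒜 1 x = x := by
  conv_rhs => rw [← (DirectSum.decompose 𝒜).symm_apply_apply x,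
    ← DirectSum.sum_univ_of (DirectSum.decompose 𝒜 x), DirectSum.decompose_symm_sum]
  simp_rw [DirectSum.decompose_symm_of]
  exact (Fin.sum_univ_two (fun i : ZMod 2 => (DirectSum.decompose 𝒜 x i : A))).symm

end GradedAlgebra

open GradedAlgebra

def IsSupercommutative {K A : Type*} [CommRing K] [Ring A] [Algebra K A]
    (𝒜 : ZMod 2 → Submodule K A) : Prop :=
  ∀ (i j : ZMod 2) (a b : A), a ∈ 𝒜 i → b ∈ 𝒜 j →
    a * b = ((-1 : K) ^ (i.val * j.val)) • (b * a)

namespace IsSupercommutative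

variable {K A : Type*} [Field K] [Ring A] [Algebra K A] {𝒜 : ZMod 2 → Submodule K A}

theorem odd_mul [GradedAlgebra 𝒜] (h𝒜 : IsSupercommutative 𝒜) {b : A} (hb : b ∈ 𝒜 1) (y : A) :
    b * y = (proj 𝒜 0 y - proj 𝒜 1 y) * b := by
  have h₀ := h𝒜 0 1 (proj 𝒜 0 y) b (Submodule.coe_mem _) hb
  have h₁ := h𝒜 1 1 (proj 𝒜 1 y) b (Submodule.coe_mem _) hb
  simp only [ZMod.val_zero, ZMod.val_one, zero_mul, one_mul, pow_zero, pow_one, one_smul,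
    neg_one_smul] at h₀ h₁
  conv_lhs => rw [← proj_zero_add_proj_one 𝒜 y]
  rw [mul_add, sub_mul, h₀, h₁, sub_neg_eq_add]

theorem odd_mul_self (hK : (2 : K) ≠ 0) (h𝒜 : IsSupercommutative 𝒜) {b : A} (hb : b ∈ 𝒜 1) :
    b * b = 0 := by
  have hanti := h𝒜 1 1 b b hb hb
  simp only [ZMod.val_one, one_mul, pow_one, neg_one_smul] at hanti
  have h2 : (2 : K) • (b * b) = 0 := by
    rw [two_smul]
    nth_rewrite 2 [hanti]
    exact add_neg_cancel _
  exact (smul_eq_zero.mp h2).resolve_left hK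

theorem odd_mem_jacobson_bot [GradedAlgebra 𝒜] (hK : (2 : K) ≠ 0) (h𝒜 : IsSupercommutative 𝒜)
    {b : A} (hb : b ∈ 𝒜 1) : b ∈ (⊥ : Ideal A).jacobson := by
  refine Ideal.mem_jacobson_iff.mpr fun y => ⟨1 - y * b, ?_⟩
  have hsq : y * b * (y * b) = 0 := by
    rw [mul_assoc, ← mul_assoc b, h𝒜.odd_mul hb, mul_assoc _ b, h𝒜.odd_mul_self hK hb,
      mul_zero, mul_zero]
  rw [Ideal.mem_bot, show (1 - y * b) * y * b = y * b - y * b * (y * b) by noncomm_ring, hsq]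
  abel

theorem span_odd_le_jacobson_bot [GradedAlgebra 𝒜] (hK : (2 : K) ≠ 0)
    (h𝒜 : IsSupercommutative 𝒜) :
    Ideal.span (𝒜 1 : Set A) ≤ (⊥ : Ideal A).jacobson :=
  Ideal.span_le.mpr fun _ hb => h𝒜.odd_mem_jacobson_bot hK hb

end IsSupercommutative

/-- if a₁, …, aₙ generate a supercommutative superalgebra A (char ≠ 2) as a
left ideal, then their even components generate A as an ideal. -/
theorem even_components_generate {K A : Type} [Field K] (hK : (2 : K) ≠ 0)
    [Ring A] [Algebra K A] (𝒜 : ZMod 2 → Submodule K A) [GradedAlgebra 𝒜]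
    (hcomm : ∀ (i j : ZMod 2) (a b : A), a ∈ 𝒜 i → b ∈ 𝒜 j →
      a * b = ((-1 : K) ^ (i.val * j.val)) • (b * a))
    (n : ℕ) (a : Fin n → A)
    (h : Ideal.span (Set.range a) = ⊤) :
    Ideal.span (Set.range fun i => GradedAlgebra.proj 𝒜 0 (a i)) = ⊤ := by
  obtain ⟨r, hr⟩ :=
    Ideal.mem_span_range_iff_exists_fun.mp (h ▸ Submodule.mem_top (x := (1 : A)))
  set y := ∑ i, r i * proj 𝒜 0 (a i)
  set x := ∑ i, r i * proj 𝒜 1 (a i)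
  have hyx : y = 1 - x := by
    rw [eq_sub_iff_add_eq, ← Finset.sum_add_distrib, ← hr]
    simp only [← mul_add, proj_zero_add_proj_one]
  have hx : x ∈ (⊥ : Ideal A).jacobson :=
    IsSupercommutative.span_odd_le_jacobson_bot hK hcomm <|
      Ideal.sum_mem _ fun i _ => Ideal.mul_mem_left _ _ (Ideal.subset_span (Submodule.coe_mem _))
  obtain ⟨s, hs⟩ := Ideal.exists_mul_sub_mem_of_sub_one_mem_jacobson y
    (by rwa [hyx, sub_sub_cancel_left, neg_mem_iff])
  rw [Ideal.mem_bot, sub_eq_zero] at hs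
  rw [Ideal.eq_top_iff_one, ← hs]
  exact Ideal.mul_mem_left _ _ <|
    Ideal.sum_mem _ fun i _ => Ideal.mul_mem_left _ _ (Ideal.subset_span ⟨i, rfl⟩)
end

section
/- Let A be a finitely generated supercommutative superalgebra over a field, V a finitely generated A-supermodule, and I a superideal of A. Then ⋂_{t≥0} Iᵗ V = { v ∈ V : ∃ x ∈ I₀, (1 − x)v = 0 } (super Krull intersection theorem). -/
/-!
The even part `A₀` is central in `A`, hence a commutative ring, and `A` is spanned over any
subalgebra `S ⊆ A₀` containing the even parts of the generators by the products of distinct odd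
parts of the generators, because odd elements anticommute and square to zero. Taking for `S` the
finitely generated subalgebra spanned by those even parts makes `A`, hence `A₀ ⊆ A`, a Noetherian
`S`-module, so `A₀` is a Noetherian ring; taking `S = A₀` makes `V` a finite `A₀`-module.
Splitting elements of the superideal `I` into homogeneous parts gives `I² ⊆ A · I₀`, hence
`I²ᵗ V ⊆ I₀ᵗ V`, and the Krull intersection theorem over `A₀` yields `x ∈ I₀` with `x v = v`.
-/

theorem Subalgebra.isNoetherianRing_of_fg_of_finite {K A : Type*} [CommRing K]
    [IsNoetherianRing K] [Ring A] [Algebra K A]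
    {R B : Subalgebra K A} (hRB : R ≤ B)
    (hB : ∀ b ∈ B, ∀ a : A, b * a = a * b) (hR : R.FG) [Module.Finite R A] :
    IsNoetherianRing B := by
  let : CommRing R := { R.toRing with mul_comm := fun x y => Subtype.ext (hB x (hRB x.2) y) }
  let : CommRing B := { B.toRing with mul_comm := fun x y => Subtype.ext (hB x x.2 y) }
  have : Algebra.FiniteType K R := ⟨(Subalgebra.fg_top R).2 hR⟩
  have : IsNoetherianRing R := Algebra.FiniteType.isNoetherianRing K R
  let : Algebra R B := (Subalgebra.inclusion hRB).toRingHom.toAlgebra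
  have : IsNoetherian R B := isNoetherian_of_injective
    ({ toFun := Subtype.val, map_add' := fun _ _ => rfl, map_smul' := fun _ _ => rfl } :
      B →ₗ[R] A) Subtype.val_injective
  exact isNoetherian_of_tower R this

theorem Submodule.smul_mem_ideal_smul_of_stable {R M B : Type*} [CommSemiring R]
    [AddCommMonoid M] [Module R M] [Monoid B] [DistribMulAction B M] [SMulCommClass B R M]
    (J : Ideal R) {N : Submodule R M} (hN : ∀ b : B, ∀ n ∈ N, b • n ∈ N) (b : B) {m : M}
    (hm : m ∈ J • N) : b • m ∈ J • N := by
  refine Submodule.smul_induction_on hm (fun r hr n hn => ?_) fun x y hx hy => ?_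
  · rw [smul_comm]; exact Submodule.smul_mem_smul hr (hN b n hn)
  · rw [smul_add]; exact add_mem hx hy

theorem Submodule.mem_span_pow_smul_of_smul_eq {K A V : Type*} [CommSemiring K] [Semiring A]
    [Algebra K A] [AddCommMonoid V] [Module K V] [Module A V] (I : Submodule K A) {x : A}
    (hx : x ∈ I) {v : V} (hxv : x • v = v) (t : ℕ) :
    v ∈ Submodule.span K {y : V | ∃ a ∈ I ^ t, ∃ w : V, y = a • w} := by
  have hpow : x ^ t • v = v := by
    induction t with
    | zero => rw [pow_zero, one_smul]
    | succ t ih => rw [pow_succ, mul_smul, hxv, ih]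
  exact Submodule.subset_span ⟨x ^ t, Submodule.pow_mem_pow I hx t, v, hpow.symm⟩

def nodupProds {M : Type*} [Monoid M] (s : Set M) : Set M :=
  Set.range fun l : {l : List s // l.Nodup} => (l.1.map Subtype.val).prod

theorem Set.Finite.nodupProds {M : Type*} [Monoid M] {s : Set M} (hs : s.Finite) :
    (nodupProds s).Finite := by
  classical
  have := hs.fintype
  exact Set.finite_range _

section Graded

variable {K A : Type*} [Field K] [Ring A] [Algebra K A]
variable (𝒜 : ZMod 2 → Submodule K A) [GradedAlgebra 𝒜]

theorem proj_zero_add_proj_one (a : A) :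
    GradedAlgebra.proj 𝒜 0 a + GradedAlgebra.proj 𝒜 1 a = a := by
  conv_rhs => rw [← (DirectSum.decompose 𝒜).symm_apply_apply a,
    ← DirectSum.sum_univ_of (DirectSum.decompose 𝒜 a)]
  simp [show (Finset.univ : Finset (ZMod 2)) = {0, 1} from rfl]

theorem adjoin_union_image_proj_one_eq_top {s : Set A} (hs : Algebra.adjoin K s = ⊤)
    {S : Subalgebra K A} (hsS : ∀ a ∈ s, GradedAlgebra.proj 𝒜 0 a ∈ S) :
    Algebra.adjoin K (↑S ∪ GradedAlgebra.proj 𝒜 1 '' s) = ⊤ := by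
  refine eq_top_iff.2 (hs ▸ Algebra.adjoin_le fun a ha => ?_)
  rw [← proj_zero_add_proj_one 𝒜 a]
  exact add_mem (Algebra.subset_adjoin (Or.inl (hsS a ha)))
    (Algebra.subset_adjoin (Or.inr ⟨a, ha, rfl⟩))

def evenIdeal (I : Submodule K A) (hI : ∀ a : A, ∀ x ∈ I, a * x ∈ I) :
    Ideal (SetLike.GradeZero.subalgebra 𝒜) where
  carrier := {x | (x : A) ∈ I}
  add_mem' := I.add_mem
  zero_mem' := I.zero_mem
  smul_mem' c x hx := hI c x hx

theorem exists_even_add_odd {I : Submodule K A}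
    (hI : ∀ x ∈ I, ∀ i : ZMod 2, GradedAlgebra.proj 𝒜 i x ∈ I) {x : A} (hx : x ∈ I) :
    ∃ x₀ x₁, x₀ ∈ I ∧ x₀ ∈ 𝒜 0 ∧ x₁ ∈ I ∧ x₁ ∈ 𝒜 1 ∧ x₀ + x₁ = x :=
  ⟨_, _, hI x hx 0, Submodule.coe_mem _, hI x hx 1, Submodule.coe_mem _,
    proj_zero_add_proj_one 𝒜 x⟩

end Graded

variable {K A : Type*} [Field K] [Ring A] [Algebra K A]

class IsSuperCommutative (𝒜 : ZMod 2 → Submodule K A) : Prop where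
  mul_comm : ∀ (i j : ZMod 2) (a b : A), a ∈ 𝒜 i → b ∈ 𝒜 j →
    a * b = ((-1 : K) ^ (i.val * j.val)) • (b * a)

namespace IsSuperCommutative

variable {𝒜 : ZMod 2 → Submodule K A} [IsSuperCommutative 𝒜]

theorem even_mul_comm [GradedAlgebra 𝒜] {r : A} (hr : r ∈ 𝒜 0) (a : A) : r * a = a * r := by
  induction a using DirectSum.Decomposition.inductionOn 𝒜 with
  | zero => simp
  | homogeneous b => simpa using mul_comm 0 _ r b hr b.2
  | add x y hx hy => rw [mul_add, add_mul, hx, hy]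

theorem odd_mul_odd {x y : A} (hx : x ∈ 𝒜 1) (hy : y ∈ 𝒜 1) : x * y = -(y * x) := by
  simpa [show (1 : ZMod 2).val = 1 from rfl] using mul_comm 1 1 x y hx hy

theorem odd_mul_self (hK : (2 : K) ≠ 0) {x : A} (hx : x ∈ 𝒜 1) : x * x = 0 := by
  have h : (2 : K) • (x * x) = 0 := by
    rw [two_smul]; nth_rw 1 [odd_mul_odd hx hx]; exact neg_add_cancel _
  exact (smul_eq_zero.1 h).resolve_left hK

theorem odd_mul_list_prod_eq_zero (hK : (2 : K) ≠ 0) {x : A} {l : List A}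
    (hl : ∀ y ∈ l, y ∈ 𝒜 1) (hx : x ∈ l) : x * l.prod = 0 := by
  induction l with
  | nil => simp at hx
  | cons y l ih =>
    have hy := hl y List.mem_cons_self
    rw [List.prod_cons, ← mul_assoc]
    rcases List.mem_cons.1 hx with rfl | hxl
    · rw [odd_mul_self hK hy, zero_mul]
    · rw [odd_mul_odd (hl x hx) hy, neg_mul, mul_assoc,
        ih (fun z hz => hl z (List.mem_cons_of_mem y hz)) hxl, mul_zero, neg_zero]

theorem odd_mul_mem_nodupProds_or_eq_zero (hK : (2 : K) ≠ 0) {s : Set A}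
    (hs : ∀ y ∈ s, y ∈ 𝒜 1) {x g : A} (hx : x ∈ s) (hg : g ∈ nodupProds s) :
    x * g ∈ nodupProds s ∨ x * g = 0 := by
  obtain ⟨⟨l, hl⟩, rfl⟩ := hg
  by_cases hxl : ⟨x, hx⟩ ∈ l
  · exact Or.inr (odd_mul_list_prod_eq_zero hK (by simpa using fun y hy _ => hs y hy)
      (List.mem_map_of_mem hxl))
  · exact Or.inl ⟨⟨⟨x, hx⟩ :: l, List.nodup_cons.2 ⟨hxl, hl⟩⟩, by simp⟩

variable [GradedAlgebra 𝒜]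

theorem odd_mul_mem_span_nodupProds (hK : (2 : K) ≠ 0) {S : Subalgebra K A}
    (hS : S ≤ SetLike.GradeZero.subalgebra 𝒜) {s : Set A} (hs : ∀ y ∈ s, y ∈ 𝒜 1) {x p : A}
    (hx : x ∈ s) (hp : p ∈ Submodule.span S (nodupProds s)) :
    x * p ∈ Submodule.span S (nodupProds s) := by
  induction hp using Submodule.span_induction with
  | mem g hg =>
    rcases odd_mul_mem_nodupProds_or_eq_zero hK hs hx hg with h | h
    · exact Submodule.subset_span h
    · exact h ▸ Submodule.zero_mem _
  | zero => rw [mul_zero]; exact Submodule.zero_mem _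
  | add p q _ _ hp hq => rw [mul_add]; exact add_mem hp hq
  | smul r p _ hp =>
    have hrx : x * (r • p) = r • (x * p) := by
      simp only [Subalgebra.smul_def, smul_eq_mul]
      rw [← mul_assoc, ← even_mul_comm (hS r.2), mul_assoc]
    exact hrx ▸ Submodule.smul_mem _ r hp

theorem span_nodupProds_eq_top (hK : (2 : K) ≠ 0) {S : Subalgebra K A}
    (hS : S ≤ SetLike.GradeZero.subalgebra 𝒜) {s : Set A} (hs : ∀ y ∈ s, y ∈ 𝒜 1)
    (hgen : Algebra.adjoin K (↑S ∪ s) = ⊤) : Submodule.span S (nodupProds s) = ⊤ := by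
  set P := Submodule.span S (nodupProds s)
  have hmul : ∀ a : A, ∀ p ∈ P, a * p ∈ P := by
    intro a
    induction (hgen ▸ Algebra.mem_top : a ∈ Algebra.adjoin K (↑S ∪ s))
      using Algebra.adjoin_induction with
    | mem x hx =>
      rcases hx with hx | hx
      · exact fun p hp => P.smul_mem ⟨x, hx⟩ hp
      · exact fun p hp => odd_mul_mem_span_nodupProds hK hS hs hx hp
    | algebraMap k =>
      intro p hp
      rw [← Algebra.smul_def, ← algebraMap_smul S k p]
      exact P.smul_mem _ hp
    | add a b _ _ ha hb => exact fun p hp => by rw [add_mul]; exact add_mem (ha p hp) (hb p hp)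
    | mul a b _ _ ha hb => exact fun p hp => by rw [mul_assoc]; exact ha _ (hb p hp)
  have hone : (1 : A) ∈ P := Submodule.subset_span ⟨⟨[], List.nodup_nil⟩, rfl⟩
  exact eq_top_iff.2 fun a _ => mul_one a ▸ hmul a 1 hone

theorem module_finite_of_proj_zero_mem (hK : (2 : K) ≠ 0) {s : Set A} (hfin : s.Finite)
    (hgen : Algebra.adjoin K s = ⊤) {S : Subalgebra K A}
    (hS : S ≤ SetLike.GradeZero.subalgebra 𝒜)
    (hsS : ∀ a ∈ s, GradedAlgebra.proj 𝒜 0 a ∈ S) : Module.Finite S A := by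
  refine ⟨Submodule.fg_def.2
    ⟨nodupProds (GradedAlgebra.proj 𝒜 1 '' s), (hfin.image _).nodupProds, ?_⟩⟩
  refine span_nodupProds_eq_top hK hS ?_ (adjoin_union_image_proj_one_eq_top 𝒜 hgen hsS)
  rintro _ ⟨a, -, rfl⟩
  exact Submodule.coe_mem _

instance : CommRing (SetLike.GradeZero.subalgebra 𝒜) :=
  { (SetLike.GradeZero.subalgebra 𝒜).toRing with
    mul_comm := fun x y => Subtype.ext (even_mul_comm x.2 y) }

instance : Algebra (SetLike.GradeZero.subalgebra 𝒜) A :=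
  Algebra.ofModule smul_mul_assoc fun r x y => by
    simp only [Subalgebra.smul_def, smul_eq_mul]
    rw [← mul_assoc, ← even_mul_comm r.2, mul_assoc]

theorem isNoetherianRing_even (hK : (2 : K) ≠ 0)
    (hfg : ∃ s : Finset A, Algebra.adjoin K (s : Set A) = ⊤) :
    IsNoetherianRing (SetLike.GradeZero.subalgebra 𝒜) := by
  obtain ⟨s, hs⟩ := hfg
  set R := Algebra.adjoin K (GradedAlgebra.proj 𝒜 0 '' s)
  have hR : R ≤ SetLike.GradeZero.subalgebra 𝒜 :=
    Algebra.adjoin_le (by rintro _ ⟨a, -, rfl⟩; exact Submodule.coe_mem _)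
  have := module_finite_of_proj_zero_mem hK s.finite_toSet hs hR
    fun a ha => Algebra.subset_adjoin ⟨a, ha, rfl⟩
  exact Subalgebra.isNoetherianRing_of_fg_of_finite hR (fun b hb => even_mul_comm hb)
    (Subalgebra.fg_def.2 ⟨_, s.finite_toSet.image _, rfl⟩)

theorem module_finite_even (hK : (2 : K) ≠ 0)
    (hfg : ∃ s : Finset A, Algebra.adjoin K (s : Set A) = ⊤) :
    Module.Finite (SetLike.GradeZero.subalgebra 𝒜) A := by
  obtain ⟨s, hs⟩ := hfg
  exact module_finite_of_proj_zero_mem hK s.finite_toSet hs le_rfl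
    fun a _ => Submodule.coe_mem _

variable {V : Type*} [AddCommGroup V] [Module A V] {I : Submodule K A}

theorem mul_smul_mem_evenIdeal_smul (hIl : ∀ a : A, ∀ x ∈ I, a * x ∈ I)
    (hIhom : ∀ x ∈ I, ∀ i : ZMod 2, GradedAlgebra.proj 𝒜 i x ∈ I)
    {N : Submodule (SetLike.GradeZero.subalgebra 𝒜) V} (hN : ∀ a : A, ∀ n ∈ N, a • n ∈ N)
    {p : A} (hp : p ∈ I * I) {n : V} (hn : n ∈ N) : p • n ∈ evenIdeal 𝒜 I hIl • N := by
  have hmem : ∀ z ∈ I, z ∈ 𝒜 0 → ∀ m ∈ N, z • m ∈ evenIdeal 𝒜 I hIl • N :=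
    fun z hzI hz m hm =>
      Submodule.smul_mem_smul (r := (⟨z, hz⟩ : SetLike.GradeZero.subalgebra 𝒜)) hzI hm
  refine Submodule.mul_induction_on hp (fun x hx y hy => ?_) fun p q hp hq => ?_
  · obtain ⟨x₀, x₁, hx₀I, hx₀, hx₁I, hx₁, rfl⟩ := exists_even_add_odd 𝒜 hIhom hx
    obtain ⟨y₀, y₁, hy₀I, hy₀, hy₁I, hy₁, rfl⟩ := exists_even_add_odd 𝒜 hIhom hy
    have hx₁y₁ : x₁ * y₁ ∈ 𝒜 0 := SetLike.mul_mem_graded hx₁ hy₁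
    have hxy : (x₀ + x₁) * (y₀ + y₁) = y₀ * (x₀ + x₁) + x₀ * y₁ + x₁ * y₁ := by
      rw [even_mul_comm hy₀]; noncomm_ring
    rw [hxy, add_smul, add_smul, mul_smul, mul_smul]
    exact add_mem (add_mem (hmem _ hy₀I hy₀ _ (hN _ _ hn)) (hmem _ hx₀I hx₀ _ (hN _ _ hn)))
      (hmem _ (hIl _ _ hy₁I) hx₁y₁ _ hn)
  · rw [add_smul]; exact add_mem hp hq

theorem smul_mem_evenIdeal_pow_smul_top (hIl : ∀ a : A, ∀ x ∈ I, a * x ∈ I)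
    (hIhom : ∀ x ∈ I, ∀ i : ZMod 2, GradedAlgebra.proj 𝒜 i x ∈ I) (t : ℕ) {a : A}
    (ha : a ∈ I ^ (2 * t)) (v : V) :
    a • v ∈ evenIdeal 𝒜 I hIl ^ t • (⊤ : Submodule (SetLike.GradeZero.subalgebra 𝒜) V) := by
  induction t generalizing a with
  | zero => simp
  | succ t ih =>
    rw [mul_add, mul_one, add_comm, pow_add, pow_two] at ha
    refine Submodule.mul_induction_on ha (fun p hp q hq => ?_) fun b c hb hc => ?_
    · rw [mul_smul, pow_succ', Submodule.mul_smul]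
      refine mul_smul_mem_evenIdeal_smul hIl hIhom (fun a n hn => ?_) hp (ih hq)
      exact Submodule.smul_mem_ideal_smul_of_stable _ (fun _ _ _ => Submodule.mem_top) a hn
    · rw [add_smul]; exact add_mem hb hc

theorem span_pow_two_mul_smul_le [Module K V] [IsScalarTower K A V]
    (hIl : ∀ a : A, ∀ x ∈ I, a * x ∈ I)
    (hIhom : ∀ x ∈ I, ∀ i : ZMod 2, GradedAlgebra.proj 𝒜 i x ∈ I) (t : ℕ) :
    Submodule.span K {y : V | ∃ a ∈ I ^ (2 * t), ∃ w : V, y = a • w} ≤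
      (evenIdeal 𝒜 I hIl ^ t • (⊤ : Submodule (SetLike.GradeZero.subalgebra 𝒜) V)).restrictScalars
        K :=
  Submodule.span_le.2 <| by
    rintro _ ⟨a, ha, w, rfl⟩
    exact smul_mem_evenIdeal_pow_smul_top hIl hIhom t ha w

end IsSuperCommutative

open IsSuperCommutative in
theorem super_krull_intersection_general {K A : Type} [Field K] (hK : (2 : K) ≠ 0)
    [Ring A] [Algebra K A] (𝒜 : ZMod 2 → Submodule K A) [GradedAlgebra 𝒜]
    (hcomm : ∀ (i j : ZMod 2) (a b : A), a ∈ 𝒜 i → b ∈ 𝒜 j →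
      a * b = ((-1 : K) ^ (i.val * j.val)) • (b * a))
    (hfg : ∃ s : Finset A, Algebra.adjoin K (s : Set A) = ⊤)
    {V : Type} [AddCommGroup V] [Module K V] [Module A V] [IsScalarTower K A V]
    [Module.Finite A V]
    (I : Submodule K A)
    (hIl : ∀ a : A, ∀ x ∈ I, a * x ∈ I)
    (hIhom : ∀ x ∈ I, ∀ i : ZMod 2, GradedAlgebra.proj 𝒜 i x ∈ I) :
    ((⨅ t : ℕ, Submodule.span K
        {y : V | ∃ a ∈ (I ^ t : Submodule K A), ∃ v : V, y = a • v}) : Set V)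
      = {v : V | ∃ x : A, x ∈ I ∧ x ∈ 𝒜 0 ∧ (1 - x) • v = 0} := by
  have : IsSuperCommutative 𝒜 := ⟨hcomm⟩
  have := isNoetherianRing_even (𝒜 := 𝒜) hK hfg
  have := module_finite_even (𝒜 := 𝒜) hK hfg
  have : Module.Finite (SetLike.GradeZero.subalgebra 𝒜) V := Module.Finite.trans A V
  ext v
  simp only [Set.iInf_eq_iInter, Set.mem_iInter, SetLike.mem_coe]
  constructor
  · intro hv
    have hvJ : v ∈ ⨅ t : ℕ,
        evenIdeal 𝒜 I hIl ^ t • (⊤ : Submodule (SetLike.GradeZero.subalgebra 𝒜) V) :=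
      Submodule.mem_iInf _ |>.2 fun t => span_pow_two_mul_smul_le hIl hIhom t (hv (2 * t))
    obtain ⟨⟨r, hrI⟩, hr⟩ := ((evenIdeal 𝒜 I hIl).mem_iInf_smul_pow_eq_bot_iff v).1 hvJ
    exact ⟨r, hrI, r.2, by rw [sub_smul, one_smul, sub_eq_zero]; exact hr.symm⟩
  · rintro ⟨x, hxI, -, hxv⟩ t
    exact Submodule.mem_span_pow_smul_of_smul_eq I hxI
      (by rwa [sub_smul, one_smul, sub_eq_zero, eq_comm] at hxv) t

/-- super Krull intersection theorem: for a finitely generated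
supercommutative superalgebra A, a finitely generated A-supermodule V and a superideal I,
⋂ₜ IᵗV = { v ∈ V : ∃ x ∈ I₀, (1 − x)v = 0 }. -/
theorem super_krull_intersection {K A : Type} [Field K] (hK : (2 : K) ≠ 0)
    [Ring A] [Algebra K A] (𝒜 : ZMod 2 → Submodule K A) [GradedAlgebra 𝒜]
    (hcomm : ∀ (i j : ZMod 2) (a b : A), a ∈ 𝒜 i → b ∈ 𝒜 j →
      a * b = ((-1 : K) ^ (i.val * j.val)) • (b * a))
    (hfg : ∃ s : Finset A, Algebra.adjoin K (s : Set A) = ⊤)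
    {V : Type} [AddCommGroup V] [Module K V] [Module A V] [IsScalarTower K A V]
    [Module.Finite A V]
    (𝒱 : ZMod 2 → Submodule K V) [DirectSum.Decomposition 𝒱]
    (hVgr : ∀ (i j : ZMod 2) (a : A) (v : V), a ∈ 𝒜 i → v ∈ 𝒱 j → a • v ∈ 𝒱 (i + j))
    (I : Submodule K A)
    (hIl : ∀ a : A, ∀ x ∈ I, a * x ∈ I) (hIr : ∀ a : A, ∀ x ∈ I, x * a ∈ I)
    (hIhom : ∀ x ∈ I, ∀ i : ZMod 2, GradedAlgebra.proj 𝒜 i x ∈ I) :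
    ((⨅ t : ℕ, Submodule.span K
        {y : V | ∃ a ∈ (I ^ t : Submodule K A), ∃ v : V, y = a • v}) : Set V)
      = {v : V | ∃ x : A, x ∈ I ∧ x ∈ 𝒜 0 ∧ (1 - x) • v = 0} :=
  super_krull_intersection_general hK 𝒜 hcomm hfg I hIl hIhom
end

section
/- Let R be a supercommutative superalgebra over a field of characteristic 0 with R₀ = K·1 and R₁² = 0 (so R = K ⊕ R₁ with R₁ an odd square-zero ideal). Then every flat R-supermodule is flat as an R-module: any short exact sequence of (ungraded) R-modules 0 → V → W → U → 0 is isomorphic to a short exact sequence of R-supermodules, by setting V₁ = V ∩ R₁W and choosing complements compatibly. -/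
/-!
Let `θ` be the parity automorphism `r₀ + r₁ ↦ r₀ - r₁` of `R`, and for an `R`-module `N` let
`N^θ` be `N` with `R` acting through `θ`. Then `N ⊕ N^θ` is an `R`-supermodule whose even and odd
parts are the diagonal and the antidiagonal (complementary because `2` is invertible), and an
injection `f : N → P` induces the even injection `f ⊕ f : N ⊕ N^θ → P ⊕ P^θ`. So `M ⊗ (f ⊕ f)` is
injective, hence so is its restriction `M ⊗ f` to the first summand; taking for `f` the
inclusions of ideals gives flatness.
-/

open LinearMap

theorem LinearMap.isCompl_graph_of_bijective_sub {K A B : Type*} [Ring K] [AddCommGroup A]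
    [AddCommGroup B] [Module K A] [Module K B] {f g : A →ₗ[K] B} (h : Function.Bijective (f - g)) :
    IsCompl f.graph g.graph := by
  constructor
  · rw [Submodule.disjoint_def]
    rintro ⟨a, b⟩ hf hg
    rw [mem_graph_iff] at hf hg
    simp only at hf hg
    have ha : a = 0 := h.1 <| by simp [← hf, ← hg]
    simp [ha, hf]
  · rw [codisjoint_iff, eq_top_iff]
    rintro ⟨x, y⟩ -
    obtain ⟨a, ha⟩ := h.2 (y - g x)
    have hxy : (x, y) = (a, f a) + (x - a, g (x - a)) := by
      rw [sub_apply, sub_eq_iff_eq_add] at ha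
      ext <;> simp [ha]
    rw [hxy]
    exact Submodule.add_mem_sup (by simp) (by simp)

section LTensor

variable {R M N P N' P' : Type*} [CommRing R] [AddCommGroup M] [AddCommGroup N] [AddCommGroup P]
  [AddCommGroup N'] [AddCommGroup P'] [Module R M] [Module R N] [Module R P] [Module R N']
  [Module R P']

theorem LinearMap.lTensor_inl_injective : Function.Injective (lTensor M (inl R N N')) :=
  Function.LeftInverse.injective (g := lTensor M (fst R N N')) fun x => by
    rw [← lTensor_comp_apply, fst_comp_inl, lTensor_id, id_apply]

theorem LinearMap.lTensor_injective_of_lTensor_prodMap_injective {f : N →ₗ[R] P}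
    (g : N' →ₗ[R] P') (h : Function.Injective (lTensor M (f.prodMap g))) :
    Function.Injective (lTensor M f) := by
  have hcomm : lTensor M (inl R P P') ∘ₗ lTensor M f =
      lTensor M (f.prodMap g) ∘ₗ lTensor M (inl R N N') := by
    rw [← lTensor_comp, ← lTensor_comp]
    congr 1
    ext <;> simp
  refine ((lTensor_inl_injective (N' := P')).of_comp_iff _).mp ?_
  rw [← coe_comp, hcomm, coe_comp]
  exact h.comp (lTensor_inl_injective (N' := N'))

end LTensor

section Parity

variable {K R : Type*} [CommRing K] [CommRing R] [Algebra K R] {R₁ : Submodule K R}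

theorem exists_eq_algebraMap_add (hcompl : IsCompl (range (Algebra.linearMap K R)) R₁)
    (r : R) : ∃ a : K, ∃ x ∈ R₁, r = algebraMap K R a + x := by
  obtain ⟨_, x, ⟨a, rfl⟩, hx, rfl⟩ :=
    Submodule.codisjoint_iff_exists_add_eq.mp hcompl.codisjoint r
  exact ⟨a, x, hx, rfl⟩

/-- The parity automorphism `r₀ + r₁ ↦ r₀ - r₁`; it is multiplicative because `R₁ * R₁ = 0`. -/
noncomputable def parityAut (hsq : ∀ x ∈ R₁, ∀ y ∈ R₁, x * y = 0)
    (hcompl : IsCompl (range (Algebra.linearMap K R)) R₁) : R →ₐ[K] R :=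
  let θ := ofIsCompl hcompl (range (Algebra.linearMap K R)).subtype (-R₁.subtype)
  have hθ (a : K) (x : R) (hx : x ∈ R₁) : θ (algebraMap K R a + x) = algebraMap K R a - x := by
    rw [map_add, sub_eq_add_neg]
    exact congr_arg₂ (· + ·) (ofIsCompl_apply_left hcompl ⟨_, a, rfl⟩)
      (ofIsCompl_apply_right hcompl ⟨x, hx⟩)
  AlgHom.ofLinearMap θ (by simpa using hθ 1 0 R₁.zero_mem) fun r s => by
    obtain ⟨a, x, hx, rfl⟩ := exists_eq_algebraMap_add hcompl r
    obtain ⟨b, y, hy, rfl⟩ := exists_eq_algebraMap_add hcompl s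
    have hmul : (algebraMap K R a + x) * (algebraMap K R b + y) =
        algebraMap K R (a * b) + (a • y + b • x) := by
      rw [map_mul, Algebra.smul_def, Algebra.smul_def]
      linear_combination hsq x hx y hy
    rw [hmul, hθ _ _ (R₁.add_mem (R₁.smul_mem a hy) (R₁.smul_mem b hx)), hθ a x hx, hθ b y hy,
      map_mul, Algebra.smul_def, Algebra.smul_def]
    linear_combination -hsq x hx y hy

theorem parityAut_of_mem (hsq : ∀ x ∈ R₁, ∀ y ∈ R₁, x * y = 0)
    (hcompl : IsCompl (range (Algebra.linearMap K R)) R₁) {x : R} (hx : x ∈ R₁) :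
    parityAut hsq hcompl x = -x :=
  ofIsCompl_apply_right hcompl ⟨x, hx⟩

end Parity

/-- `N` with `r : R` acting as `θ r`. -/
def Twist {K R : Type*} [CommSemiring K] [Semiring R] [Algebra K R] (_θ : R →ₐ[K] R)
    (N : Type*) : Type _ := N

namespace Twist

section

variable {K R : Type*} [CommSemiring K] [Semiring R] [Algebra K R] (θ : R →ₐ[K] R)
  {N P : Type*} [AddCommGroup N] [AddCommGroup P]

instance : AddCommGroup (Twist θ N) := ‹AddCommGroup N›

instance [Module R N] : Module R (Twist θ N) := Module.compHom N θ.toRingHom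

instance [Module K N] : Module K (Twist θ N) := ‹Module K N›

instance [Module K N] [Module R N] [IsScalarTower K R N] : IsScalarTower K R (Twist θ N) where
  smul_assoc k r (n : N) := by
    change θ (k • r) • n = k • θ r • n
    rw [map_smul, smul_assoc]

variable (N) in
def of [Module K N] : N ≃ₗ[K] Twist θ N := LinearEquiv.refl K N

variable [Module R N] [Module R P]

theorem smul_of [Module K N] (r : R) (n : N) : r • of θ N n = of θ N (θ r • n) := rfl

def map (f : N →ₗ[R] P) : Twist θ N →ₗ[R] Twist θ P where
  toFun := f
  map_add' := f.map_add
  map_smul' r := f.map_smul (θ r)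

theorem map_of [Module K N] [Module K P] (f : N →ₗ[R] P) (n : N) :
    map θ f (of θ N n) = of θ P (f n) := rfl

theorem map_injective {f : N →ₗ[R] P} (hf : Function.Injective f) :
    Function.Injective (map θ f) := hf

end

section Graded

variable {K R : Type*} [CommRing K] [Ring R] [Algebra K R] (θ : R →ₐ[K] R)
  (N : Type*) [AddCommGroup N] [Module K N] {P : Type*} [AddCommGroup P] [Module K P]

def diagonal : Submodule K (N × Twist θ N) := (of θ N : N →ₗ[K] Twist θ N).graph

def antidiagonal : Submodule K (N × Twist θ N) := (-(of θ N : N →ₗ[K] Twist θ N)).graph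

theorem isCompl_diagonal_antidiagonal [Invertible (2 : K)] :
    IsCompl (diagonal θ N) (antidiagonal θ N) := by
  refine isCompl_graph_of_bijective_sub ?_
  have hsub : (of θ N : N →ₗ[K] Twist θ N) - -(of θ N : N →ₗ[K] Twist θ N) =
      ((LinearEquiv.smulOfUnit (unitOfInvertible (2 : K))).trans (of θ N) :
        N →ₗ[K] Twist θ N) := by
    ext n
    rw [LinearMap.sub_apply, LinearMap.neg_apply, sub_neg_eq_add]
    change n + n = ((unitOfInvertible (2 : K) : K) • n : N)
    rw [val_unitOfInvertible, two_smul]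
  rw [hsub]
  exact LinearEquiv.bijective _

variable {θ N} [Module R N] [Module R P]

theorem smul_mem_antidiagonal {r : R} (hr : θ r = -r) {v : N × Twist θ N}
    (hv : v ∈ diagonal θ N) : r • v ∈ antidiagonal θ N := by
  obtain ⟨a, b⟩ := v
  have hb : b = of θ N a := hv
  rw [antidiagonal, mem_graph_iff, Prod.smul_fst, Prod.smul_snd, hb, smul_of, hr, neg_smul,
    LinearMap.neg_apply, LinearEquiv.coe_coe, map_neg]

theorem smul_mem_diagonal {r : R} (hr : θ r = -r) {v : N × Twist θ N}
    (hv : v ∈ antidiagonal θ N) : r • v ∈ diagonal θ N := by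
  obtain ⟨a, b⟩ := v
  have hb : b = -of θ N a := hv
  rw [diagonal, mem_graph_iff, Prod.smul_fst, Prod.smul_snd, hb, ← map_neg, smul_of, hr,
    neg_smul_neg, LinearEquiv.coe_coe]

theorem prodMap_mem_diagonal (f : N →ₗ[R] P) {v : N × Twist θ N}
    (hv : v ∈ diagonal θ N) : f.prodMap (map θ f) v ∈ diagonal θ P := by
  obtain ⟨a, b⟩ := v
  have hb : b = of θ N a := hv
  rw [diagonal, mem_graph_iff, prodMap_apply, hb, map_of]
  rfl

theorem prodMap_mem_antidiagonal (f : N →ₗ[R] P) {v : N × Twist θ N}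
    (hv : v ∈ antidiagonal θ N) : f.prodMap (map θ f) v ∈ antidiagonal θ P := by
  obtain ⟨a, b⟩ := v
  have hb : b = -of θ N a := hv
  rw [antidiagonal, mem_graph_iff, prodMap_apply, hb, map_neg, map_of]
  rfl

end Graded

end Twist

def IsSuperFlat {K R : Type} [CommRing K] [CommRing R] [Algebra K R] (R₁ : Submodule K R)
    (M : Type) [AddCommGroup M] [Module R M] : Prop :=
  ∀ (V : Type) [AddCommGroup V] [Module K V] [Module R V] [IsScalarTower K R V]
      (W : Type) [AddCommGroup W] [Module K W] [Module R W] [IsScalarTower K R W]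
      (V₀ V₁ : Submodule K V) (W₀ W₁ : Submodule K W),
      IsCompl V₀ V₁ → IsCompl W₀ W₁ →
      (∀ r ∈ R₁, ∀ v ∈ V₀, r • v ∈ V₁) → (∀ r ∈ R₁, ∀ v ∈ V₁, r • v ∈ V₀) →
      (∀ r ∈ R₁, ∀ w ∈ W₀, r • w ∈ W₁) → (∀ r ∈ R₁, ∀ w ∈ W₁, r • w ∈ W₀) →
      ∀ f : V →ₗ[R] W, (∀ v ∈ V₀, f v ∈ W₀) → (∀ v ∈ V₁, f v ∈ W₁) →
        Function.Injective f → Function.Injective (LinearMap.lTensor M f)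

theorem IsSuperFlat.lTensor_injective {K R : Type} [CommRing K] [Invertible (2 : K)] [CommRing R]
    [Algebra K R] {R₁ : Submodule K R} (hsq : ∀ x ∈ R₁, ∀ y ∈ R₁, x * y = 0)
    (hcompl : IsCompl (range (Algebra.linearMap K R)) R₁)
    {M : Type} [AddCommGroup M] [Module R M] (hM : IsSuperFlat R₁ M)
    {N P : Type} [AddCommGroup N] [Module K N] [Module R N] [IsScalarTower K R N]
    [AddCommGroup P] [Module K P] [Module R P] [IsScalarTower K R P]
    {f : N →ₗ[R] P} (hf : Function.Injective f) :
    Function.Injective (lTensor M f) := by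
  set θ := parityAut hsq hcompl
  have hθ (r : R) (hr : r ∈ R₁) : θ r = -r := parityAut_of_mem hsq hcompl hr
  refine lTensor_injective_of_lTensor_prodMap_injective (Twist.map θ f) <|
    hM _ _ _ _ _ _ (Twist.isCompl_diagonal_antidiagonal θ N)
      (Twist.isCompl_diagonal_antidiagonal θ P)
      (fun r hr _ => Twist.smul_mem_antidiagonal (hθ r hr))
      (fun r hr _ => Twist.smul_mem_diagonal (hθ r hr))
      (fun r hr _ => Twist.smul_mem_antidiagonal (hθ r hr))
      (fun r hr _ => Twist.smul_mem_diagonal (hθ r hr))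
      _ (fun _ => Twist.prodMap_mem_diagonal f) (fun _ => Twist.prodMap_mem_antidiagonal f)
      (hf.prodMap (Twist.map_injective θ hf))

theorem flat_supermodule_is_flat_general {K R : Type} [Field K] [CharZero K]
    [CommRing R] [Algebra K R]
    (R₁ : Submodule K R)
    (hsq : ∀ x ∈ R₁, ∀ y ∈ R₁, x * y = 0)
    (hcompl : IsCompl (LinearMap.range (Algebra.linearMap K R)) R₁)
    (M : Type) [AddCommGroup M] [Module R M]
    (hsflat : ∀ (V : Type) [AddCommGroup V] [Module K V] [Module R V] [IsScalarTower K R V]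
      (W : Type) [AddCommGroup W] [Module K W] [Module R W] [IsScalarTower K R W]
      (V₀ V₁ : Submodule K V) (W₀ W₁ : Submodule K W),
      IsCompl V₀ V₁ → IsCompl W₀ W₁ →
      (∀ r ∈ R₁, ∀ v ∈ V₀, r • v ∈ V₁) → (∀ r ∈ R₁, ∀ v ∈ V₁, r • v ∈ V₀) →
      (∀ r ∈ R₁, ∀ w ∈ W₀, r • w ∈ W₁) → (∀ r ∈ R₁, ∀ w ∈ W₁, r • w ∈ W₀) →
      ∀ f : V →ₗ[R] W, (∀ v ∈ V₀, f v ∈ W₀) → (∀ v ∈ V₁, f v ∈ W₁) →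
        Function.Injective f → Function.Injective (LinearMap.lTensor M f)) :
    Module.Flat R M := by
  let : Invertible (2 : K) := invertibleOfNonzero two_ne_zero
  exact Module.Flat.iff_lTensor_injective'.mpr fun I =>
    IsSuperFlat.lTensor_injective hsq hcompl hsflat I.injective_subtype

/-- let R = K ⊕ R₁ be a supercommutative superalgebra over a field of
characteristic 0 with even part K·1 and odd square-zero part R₁. Then every flat
R-supermodule (a graded module such that tensoring is exact on graded injections) is flat
as an ordinary R-module. -/
theorem flat_supermodule_is_flat {K R : Type} [Field K] [CharZero K]
    [CommRing R] [Algebra K R]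
    (R₁ : Submodule K R)
    (hsq : ∀ x ∈ R₁, ∀ y ∈ R₁, x * y = 0)
    (hcompl : IsCompl (LinearMap.range (Algebra.linearMap K R)) R₁)
    (M : Type) [AddCommGroup M] [Module K M] [Module R M] [IsScalarTower K R M]
    (M₀ M₁ : Submodule K M) (hM : IsCompl M₀ M₁)
    (hM₀ : ∀ r ∈ R₁, ∀ m ∈ M₀, r • m ∈ M₁) (hM₁ : ∀ r ∈ R₁, ∀ m ∈ M₁, r • m ∈ M₀)
    (hsflat : ∀ (V : Type) [AddCommGroup V] [Module K V] [Module R V] [IsScalarTower K R V]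
      (W : Type) [AddCommGroup W] [Module K W] [Module R W] [IsScalarTower K R W]
      (V₀ V₁ : Submodule K V) (W₀ W₁ : Submodule K W),
      IsCompl V₀ V₁ → IsCompl W₀ W₁ →
      (∀ r ∈ R₁, ∀ v ∈ V₀, r • v ∈ V₁) → (∀ r ∈ R₁, ∀ v ∈ V₁, r • v ∈ V₀) →
      (∀ r ∈ R₁, ∀ w ∈ W₀, r • w ∈ W₁) → (∀ r ∈ R₁, ∀ w ∈ W₁, r • w ∈ W₀) →
      ∀ f : V →ₗ[R] W, (∀ v ∈ V₀, f v ∈ W₀) → (∀ v ∈ V₁, f v ∈ W₁) →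
        Function.Injective f → Function.Injective (LinearMap.lTensor M f)) :
    Module.Flat R M :=
  flat_supermodule_is_flat_general R₁ hsq hcompl M hsflat
end
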